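/- arXiv:1503.03936 — 4 statements merged into one kernel-verified Lean document; each statement's English description precedes it below -/
import Mathlib

section
/- Suppose the singular values of a symmetric matrix A satisfy |λⱼ| = c e^{−αj} for constants c > 0, α > 0. Then for any k and i₀ ≤ k, the product ∏_{j=1,j≠i₀}^{k} (|λⱼ| + |λ_{k+1}|)/(||λⱼ| − |λ_{i₀}||) is bounded by a constant depending only on α (independent of k and i₀); in particular it is at most ∏_{j=1}^{∞} (1 + e^{−jα}) · ∏_{j=1}^{∞} (1 − e^{−jα})^{−2}. -/
open Matrix BigOperators

/-!
Write `q = e^{-α}`, so `|λⱼ| = c qʲ`. For `j ≠ i₀` the `j`-th factor is at most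
`(1 + q^{k+1-j}) / (1 - q^{|j - i₀|})`: the numerator is `c qʲ (1 + q^{k+1-j})`, and the
denominator is at least `c qʲ (1 - q^{|j - i₀|})`. As `j` runs over `1, …, k`, the exponents
`k + 1 - j` are distinct, while each value of `|j - i₀|` occurs at most twice; all factors
`1 + qⁿ` and `(1 - qⁿ)⁻¹` are at least `1`, so the finite product is dominated by
`∏ (1 + qⁿ) · (∏ (1 - qⁿ)⁻¹)²`.
-/

open Finset

lemma prod_le_tprod_of_one_le {ι : Type*} {f : ι → ℝ} (hf : Multipliable f) (h1 : ∀ i, 1 ≤ f i)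
    (s : Finset ι) : ∏ i ∈ s, f i ≤ ∏' i, f i := by
  classical
  refine ge_of_tendsto hf.hasProd (Filter.eventually_atTop.2 ⟨s, fun t hst => ?_⟩)
  calc ∏ i ∈ s, f i ≤ (∏ i ∈ t \ s, f i) * ∏ i ∈ s, f i :=
        le_mul_of_one_le_left (prod_nonneg fun i _ => zero_le_one.trans (h1 i))
          (one_le_prod fun i _ => h1 i)
    _ = ∏ i ∈ t, f i := prod_sdiff hst

lemma prod_comp_le_tprod_of_one_le {ι κ : Type*} {f : ι → ℝ} (hf : Multipliable f)
    (h1 : ∀ i, 1 ≤ f i) {s : Finset κ} {g : κ → ι} (hg : Set.InjOn g s) :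
    ∏ j ∈ s, f (g j) ≤ ∏' i, f i := by
  classical
  rw [← prod_image hg]
  exact prod_le_tprod_of_one_le hf h1 _

lemma prod_dist_sub_one_le_sq_tprod {f : ℕ → ℝ} (hf : Multipliable f) (h1 : ∀ n, 1 ≤ f n)
    {s : Finset ℕ} {i : ℕ} (hi : i ∉ s) :
    ∏ j ∈ s, f (j.dist i - 1) ≤ (∏' n, f n) ^ 2 := by
  have below : ∏ j ∈ s with j < i, f (j.dist i - 1) ≤ ∏' n, f n := by
    refine prod_comp_le_tprod_of_one_le hf h1 fun j hj j' hj' h => ?_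
    simp only [coe_filter, Set.mem_ofPred_eq] at hj hj'
    unfold Nat.dist at h
    omega
  have above : ∏ j ∈ s with ¬ j < i, f (j.dist i - 1) ≤ ∏' n, f n := by
    refine prod_comp_le_tprod_of_one_le hf h1 fun j hj j' hj' h => ?_
    simp only [coe_filter, Set.mem_ofPred_eq] at hj hj'
    have := ne_of_mem_of_not_mem hj.1 hi
    have := ne_of_mem_of_not_mem hj'.1 hi
    unfold Nat.dist at h
    omega
  rw [← prod_filter_mul_prod_filter_not s (· < i), sq]
  exact mul_le_mul below above (prod_nonneg fun j _ => zero_le_one.trans (h1 _))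
    (tprod_nonneg fun n => zero_le_one.trans (h1 n))

lemma multipliable_inv_one_sub {ι : Type*} {f : ι → ℝ} (hf : Summable f) (h1 : ∀ i, f i < 1) :
    Multipliable fun i => (1 - f i)⁻¹ := by
  refine Real.multipliable_of_summable_log (fun i => inv_pos.2 (sub_pos.2 (h1 i))) ?_
  simp only [Real.log_inv, sub_eq_add_neg]
  exact (Real.summable_log_one_add_of_summable hf.neg).neg

section Geometric

variable {q : ℝ}

lemma pow_mul_one_sub_pow_dist_le_abs_sub (hq0 : 0 ≤ q) (hq1 : q ≤ 1) (i j : ℕ) :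
    q ^ j * (1 - q ^ j.dist i) ≤ |q ^ j - q ^ i| := by
  rcases le_total j i with hji | hij
  · have hsplit : q ^ i = q ^ j * q ^ (i - j) := by rw [← pow_add, Nat.add_sub_cancel' hji]
    rw [Nat.dist_eq_sub_of_le hji, hsplit, ← mul_one_sub]
    exact le_abs_self _
  · have hsplit : q ^ j = q ^ i * q ^ (j - i) := by rw [← pow_add, Nat.add_sub_cancel' hij]
    have hd : 0 ≤ 1 - q ^ (j - i) := sub_nonneg.2 (pow_le_one₀ hq0 hq1)
    rw [Nat.dist_eq_sub_of_le_right hij, abs_sub_comm, hsplit, ← mul_one_sub]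
    refine le_trans ?_ (le_abs_self _)
    gcongr
    exact mul_le_of_le_one_right (pow_nonneg hq0 _) (pow_le_one₀ hq0 hq1)

lemma add_pow_div_abs_sub_pow_le (c : ℝ) (hq0 : 0 ≤ q) (hq1 : q < 1) {i j m : ℕ}
    (hji : j ≠ i) (hjm : j ≤ m) :
    (c * q ^ j + c * q ^ (m + 1)) / |c * q ^ j - c * q ^ i| ≤
      (1 + q ^ (m - j + 1)) * (1 - q ^ j.dist i)⁻¹ := by
  have hd : 0 < 1 - q ^ j.dist i := sub_pos.2 (pow_lt_one₀ hq0 hq1 (Nat.dist_pos_of_ne hji).ne')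
  have hnum : c * q ^ j + c * q ^ (m + 1) = c * q ^ j * (1 + q ^ (m - j + 1)) := by
    rw [mul_assoc, mul_one_add, ← pow_add, (by omega : j + (m - j + 1) = m + 1), mul_add]
  refine div_le_of_le_mul₀ (abs_nonneg _) (by positivity) ?_
  rw [hnum, ← mul_sub, abs_mul]
  calc c * q ^ j * (1 + q ^ (m - j + 1))
      ≤ |c| * q ^ j * (1 + q ^ (m - j + 1)) := by gcongr; exact le_abs_self c
    _ = (1 + q ^ (m - j + 1)) * (1 - q ^ j.dist i)⁻¹ * (|c| * (q ^ j * (1 - q ^ j.dist i))) := by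
        field_simp
    _ ≤ (1 + q ^ (m - j + 1)) * (1 - q ^ j.dist i)⁻¹ * (|c| * |q ^ j - q ^ i|) := by
        gcongr
        exact pow_mul_one_sub_pow_dist_le_abs_sub hq0 hq1.le i j

lemma summable_pow_succ (hq0 : 0 ≤ q) (hq1 : q < 1) : Summable fun n : ℕ => q ^ (n + 1) :=
  (summable_nat_add_iff 1).2 (summable_geometric_of_lt_one hq0 hq1)

lemma multipliable_inv_one_sub_pow_succ (hq0 : 0 ≤ q) (hq1 : q < 1) :
    Multipliable fun n : ℕ => (1 - q ^ (n + 1))⁻¹ :=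
  multipliable_inv_one_sub (summable_pow_succ hq0 hq1) fun n => pow_lt_one₀ hq0 hq1 n.succ_ne_zero

lemma prod_inv_one_sub_pow_dist_le (hq0 : 0 ≤ q) (hq1 : q < 1) {s : Finset ℕ} {i : ℕ}
    (hi : i ∉ s) :
    ∏ j ∈ s, (1 - q ^ j.dist i)⁻¹ ≤ (∏' n : ℕ, (1 - q ^ (n + 1))⁻¹) ^ 2 := by
  have h1 : ∀ n : ℕ, 1 ≤ (1 - q ^ (n + 1))⁻¹ := fun n =>
    (one_le_inv₀ (sub_pos.2 (pow_lt_one₀ hq0 hq1 n.succ_ne_zero))).2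
      (sub_le_self _ (pow_nonneg hq0 _))
  calc ∏ j ∈ s, (1 - q ^ j.dist i)⁻¹ = ∏ j ∈ s, (1 - q ^ (j.dist i - 1 + 1))⁻¹ :=
        prod_congr rfl fun j hj => by
          rw [Nat.sub_add_cancel (Nat.dist_pos_of_ne (ne_of_mem_of_not_mem hj hi))]
    _ ≤ _ := prod_dist_sub_one_le_sq_tprod (multipliable_inv_one_sub_pow_succ hq0 hq1) h1 hi

lemma prod_one_add_pow_sub_le (hq0 : 0 ≤ q) (hq1 : q < 1) (k : ℕ) {s : Finset ℕ}
    (hs : s ⊆ Icc 1 k) :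
    ∏ j ∈ s, (1 + q ^ (k - j + 1)) ≤ ∏' n : ℕ, (1 + q ^ (n + 1)) := by
  refine prod_comp_le_tprod_of_one_le
    (Real.multipliable_one_add_of_summable (summable_pow_succ hq0 hq1))
    (fun n => le_add_of_nonneg_right (pow_nonneg hq0 _)) fun j hj j' hj' h => ?_
  have := mem_Icc.1 (hs hj)
  have := mem_Icc.1 (hs hj')
  omega

theorem prod_add_div_abs_sub_le_of_abs_eq_geom {c : ℝ} (hq0 : 0 ≤ q) (hq1 : q < 1) {x : ℕ → ℝ}
    (hx : ∀ j, |x j| = c * q ^ j) (k i : ℕ) :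
    ∏ j ∈ (Icc 1 k).erase i, (|x j| + |x (k + 1)|) / |(|x j| - |x i|)| ≤
      (∏' n : ℕ, (1 + q ^ (n + 1))) * (∏' n : ℕ, (1 - q ^ (n + 1))⁻¹) ^ 2 := by
  calc ∏ j ∈ (Icc 1 k).erase i, (|x j| + |x (k + 1)|) / |(|x j| - |x i|)|
      ≤ ∏ j ∈ (Icc 1 k).erase i, (1 + q ^ (k - j + 1)) * (1 - q ^ j.dist i)⁻¹ := by
        refine prod_le_prod (fun j _ => by positivity) fun j hj => ?_
        obtain ⟨hji, hj⟩ := mem_erase.1 hj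
        simp only [hx]
        exact add_pow_div_abs_sub_pow_le c hq0 hq1 hji (mem_Icc.1 hj).2
    _ = (∏ j ∈ (Icc 1 k).erase i, (1 + q ^ (k - j + 1))) *
          ∏ j ∈ (Icc 1 k).erase i, (1 - q ^ j.dist i)⁻¹ := prod_mul_distrib
    _ ≤ _ :=
        mul_le_mul (prod_one_add_pow_sub_le hq0 hq1 k (erase_subset i _))
          (prod_inv_one_sub_pow_dist_le hq0 hq1 (notMem_erase i _))
          (prod_nonneg fun j _ => inv_nonneg.2 (sub_nonneg.2 (pow_le_one₀ hq0 hq1.le)))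
          (tprod_nonneg fun n => by positivity)

end Geometric

theorem minres_stmt8_general (c α : ℝ) (hα : 0 < α) (lam : ℕ → ℝ)
    (hlam : ∀ j : ℕ, |lam j| = c * Real.exp (-α * j))
    (k i₀ : ℕ) :
    (∏ j ∈ (Finset.Icc 1 k).erase i₀, (|lam j| + |lam (k + 1)|) / abs (|lam j| - |lam i₀|)) ≤
      (∏' j : ℕ, (1 + Real.exp (-α * (j + 1)))) *
        ∏' j : ℕ, ((1 - Real.exp (-α * (j + 1))) ^ 2)⁻¹ := by
  set q := Real.exp (-α)
  have hq0 : 0 ≤ q := (Real.exp_pos _).le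
  have hq1 : q < 1 := Real.exp_lt_one_iff.2 (neg_neg_of_pos hα)
  have hpow : ∀ n : ℕ, Real.exp (-α * n) = q ^ n := fun n => by
    rw [mul_comm, Real.exp_nat_mul]
  have hpow_succ : ∀ n : ℕ, Real.exp (-α * (n + 1)) = q ^ (n + 1) := fun n => by
    exact_mod_cast hpow (n + 1)
  simp only [hpow_succ, ← inv_pow, (multipliable_inv_one_sub_pow_succ hq0 hq1).tprod_pow]
  exact prod_add_div_abs_sub_le_of_abs_eq_geom hq0 hq1 (fun j => by rw [hlam, hpow]) k i₀

/-- If `|λⱼ| = c e^{−αj}` with `c, α > 0`, then for any `k` and `1 ≤ i₀ ≤ k` the product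
`∏_{j=1,j≠i₀}^{k} (|λⱼ| + |λ_{k+1}|)/||λⱼ| − |λ_{i₀}||` is bounded by the constant
`∏_{j=1}^{∞} (1 + e^{−jα}) · ∏_{j=1}^{∞} (1 − e^{−jα})^{−2}`, independent of `k, i₀`. -/
theorem minres_stmt8 (c α : ℝ) (hc : 0 < c) (hα : 0 < α) (lam : ℕ → ℝ)
    (hlam : ∀ j : ℕ, |lam j| = c * Real.exp (-α * j))
    (k i₀ : ℕ) (hi₀1 : 1 ≤ i₀) (hi₀k : i₀ ≤ k) :
    (∏ j ∈ (Finset.Icc 1 k).erase i₀, (|lam j| + |lam (k + 1)|) / abs (|lam j| - |lam i₀|)) ≤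
      (∏' j : ℕ, (1 + Real.exp (-α * (j + 1)))) *
        ∏' j : ℕ, ((1 - Real.exp (-α * (j + 1))) ^ 2)⁻¹ :=
  minres_stmt8_general c α hα lam hlam k i₀
end

section
/- Under the setting of the previous statement, partitioning D = diag(D₁, D₂) and B_k = [B_{k1}; B_{k2}] with D₁, B_{k1} of size k×k, the matrix D₁ B_{k1} is invertible and K_k(A, Ab) = span of the columns of V [I; Δ_k], where Δ_k = D₂ B_{k2} B_{k1}^{−1} D₁^{−1}. -/
open Matrix BigOperators

/-!
Since `A = V diag(λ) Vᵀ` with `V` orthogonal, `A^(j+1) b = V diag(λ^(j+1)) Vᵀ b`, so the Krylov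
matrix `[Ab, …, A^k b]` factors as `V D B_k`, i.e. `V [D₁ B_{k1}; D₂ B_{k2}]`. The block
`D₁ B_{k1}` is a nonsingular diagonal matrix times a Vandermonde matrix on distinct nodes, and
`[D₁ B_{k1}; D₂ B_{k2}] = [I; Δ_k] (D₁ B_{k1})`; right multiplication by an invertible matrix
does not change the column span.
-/

theorem mul_mul_pow_succ_of_mul_eq_one {M : Type*} [Monoid M] {v w : M} (h : w * v = 1)
    (a : M) (j : ℕ) : (v * a * w) ^ (j + 1) = v * a ^ (j + 1) * w := by
  induction j with
  | zero => simp
  | succ j ih =>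
    rw [pow_succ, ih]
    simp only [mul_assoc]
    rw [← mul_assoc w v, h, one_mul, ← mul_assoc _ a, ← pow_succ]

namespace Matrix

section ColumnSpan

variable {R m n : Type*} [CommRing R] [Fintype n] [DecidableEq n]

theorem span_range_transpose_mul_of_isUnit_det (N : Matrix m n R) {C : Matrix n n R}
    (hC : IsUnit C.det) :
    Submodule.span R (Set.range (N * C)ᵀ) = Submodule.span R (Set.range Nᵀ) := by
  have hsurj : LinearMap.range C.mulVecLin = ⊤ := by
    rw [LinearMap.range_eq_top, coe_mulVecLin, mulVec_surjective_iff_isUnit, isUnit_iff_isUnit_det]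
    exact hC
  rw [← col, ← col, ← range_mulVecLin, ← range_mulVecLin, mulVecLin_mul,
    LinearMap.range_comp_of_range_eq_top _ hsurj]

theorem fromRows_one_mul_inv_mul {p : Type*} (Q : Matrix p n R) {P : Matrix n n R}
    (hP : IsUnit P.det) : fromRows 1 (Q * P⁻¹) * P = fromRows P Q := by
  rw [fromRows_mul, Matrix.one_mul, Matrix.mul_assoc, nonsing_inv_mul _ hP, Matrix.mul_one]

end ColumnSpan

theorem pow_succ_conj_diagonal {R n : Type*} [CommSemiring R] [Fintype n] [DecidableEq n]
    {V W : Matrix n n R} (h : W * V = 1) (d : n → R) (j : ℕ) :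
    (V * diagonal d * W) ^ (j + 1) = V * diagonal (d ^ (j + 1)) * W := by
  rw [← diagonal_pow, mul_mul_pow_succ_of_mul_eq_one h]

theorem pow_succ_conj_diagonal_mulVec_eq_transpose {R n : Type*} [CommSemiring R] [Fintype n]
    [DecidableEq n] {V W : Matrix n n R} (h : W * V = 1) (lam b : n → R) (k : ℕ) :
    (fun j : Fin k => (V * diagonal lam * W) ^ ((j : ℕ) + 1) *ᵥ b) =
      (V * (diagonal (fun q => lam q * (W *ᵥ b) q) * of fun q (j : Fin k) => lam q ^ (j : ℕ)))ᵀ := by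
  funext j p
  rw [pow_succ_conj_diagonal h, ← mulVec_mulVec, ← mulVec_mulVec, transpose_apply, mul_apply,
    mulVec, dotProduct]
  refine Finset.sum_congr rfl fun q _ => ?_
  rw [mulVec_diagonal, diagonal_mul, of_apply, Pi.pow_apply, pow_succ]
  ring

end Matrix

/-- Partitioning `D = diag(D₁, D₂)` and `B_k = [B_{k1}; B_{k2}]`, the matrix `D₁ B_{k1}`
is invertible and `K_k(A, Ab)` equals the column span of `V [I; Δ_k]` with
`Δ_k = D₂ B_{k2} B_{k1}⁻¹ D₁⁻¹`. -/
theorem minres_stmt10 (k m : ℕ)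
    (A V : Matrix (Fin k ⊕ Fin m) (Fin k ⊕ Fin m) ℝ) (lam : Fin k ⊕ Fin m → ℝ)
    (hV : V ∈ Matrix.orthogonalGroup (Fin k ⊕ Fin m) ℝ)
    (hlam0 : ∀ i, lam i ≠ 0) (hinj : Function.Injective lam)
    (hA : A = V * Matrix.diagonal lam * Vᵀ)
    (b : Fin k ⊕ Fin m → ℝ) (hb : ∀ i, (∑ j, V j i * b j) ≠ 0)
    (D1 : Matrix (Fin k) (Fin k) ℝ)
    (hD1 : D1 = Matrix.diagonal fun i => lam (Sum.inl i) * ∑ j, V j (Sum.inl i) * b j)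
    (D2 : Matrix (Fin m) (Fin m) ℝ)
    (hD2 : D2 = Matrix.diagonal fun i => lam (Sum.inr i) * ∑ j, V j (Sum.inr i) * b j)
    (B1 : Matrix (Fin k) (Fin k) ℝ)
    (hB1 : B1 = Matrix.vandermonde fun i => lam (Sum.inl i))
    (B2 : Matrix (Fin m) (Fin k) ℝ)
    (hB2 : B2 = Matrix.of fun (p : Fin m) (j : Fin k) => lam (Sum.inr p) ^ (j : ℕ)) :
    IsUnit (D1 * B1).det ∧
    Submodule.span ℝ (Set.range fun i : Fin k => (A ^ ((i : ℕ) + 1)) *ᵥ b) =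
      Submodule.span ℝ (Set.range (V * Matrix.fromRows 1 (D2 * B2 * B1⁻¹ * D1⁻¹))ᵀ) := by
  have hD1det : IsUnit D1.det := by
    rw [hD1, det_diagonal, isUnit_iff_ne_zero]
    exact Finset.prod_ne_zero_iff.mpr fun i _ => mul_ne_zero (hlam0 _) (hb _)
  have hB1det : IsUnit B1.det := by
    rw [hB1, isUnit_iff_ne_zero, det_vandermonde_ne_zero_iff]
    exact hinj.comp Sum.inl_injective
  have hdet : IsUnit (D1 * B1).det := by
    rw [det_mul]
    exact hD1det.mul hB1det
  refine ⟨hdet, ?_⟩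
  have hVtV : Vᵀ * V = 1 := (mem_orthogonalGroup_iff' _ _).mp hV
  have hKrylov : (fun i : Fin k => (A ^ ((i : ℕ) + 1)) *ᵥ b)
      = (V * fromRows (D1 * B1) (D2 * B2))ᵀ := by
    rw [hA, pow_succ_conj_diagonal_mulVec_eq_transpose hVtV]
    congr 2
    ext (q | q) j <;> simp [hD1, hD2, hB1, hB2, diagonal_mul, mulVec, dotProduct, mul_assoc]
  rw [hKrylov, Matrix.mul_assoc _ B1⁻¹, ← Matrix.mul_inv_rev,
    ← fromRows_one_mul_inv_mul (D2 * B2) hdet, ← Matrix.mul_assoc]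
  exact span_range_transpose_mul_of_isUnit_det _ hdet
end

section
/- Let A ∈ ℝ^{n×n} be symmetric with spectral decomposition A = V Λ Vᵀ, eigenvalues |λ₁| ≥ ... ≥ |λₙ|, and V_k the first k eigenvector columns, Λ_k = diag(λ₁,...,λ_k). For any matrix P = Q_k Q_kᵀ with Q_k ∈ ℝ^{n×k} having orthonormal columns, ‖A(I − P)‖ ≤ |λ_{k+1}| + |λ₁| ‖V_kᵀ(I − P)‖. -/
open Matrix BigOperators

/-- The spectral (Euclidean operator 2-) norm of a real matrix. -/
noncomputable def specNorm {m n : Type*} [Fintype m] [Fintype n] [DecidableEq n]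
    (M : Matrix m n ℝ) : ℝ :=
  ‖LinearMap.toContinuousLinearMap (Matrix.toEuclideanLin M)‖

/-!
Split `A = V Λ Vᵀ` as `V Λ_tail Vᵀ + V_k Λ_k V_kᵀ`, where `Λ_tail` keeps the eigenvalues of index
`≥ k`. The first summand is unitarily similar to `Λ_tail`, of norm at most `|λ_{k+1}|`; the second
is bounded by `‖V_k‖ ‖Λ_k‖ ‖V_kᵀ (I - P)‖` with `‖V_k‖ ≤ 1`. Since `I - P` is a self-adjoint
idempotent, `‖I - P‖ ≤ 1`, and the triangle inequality concludes.
-/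

open scoped Matrix.Norms.L2Operator

namespace Matrix

lemma mul_diagonal_indicator_range_mul {R ι l m n : Type*} [Semiring R] [Fintype ι] [Fintype n]
    [DecidableEq ι] [DecidableEq n] {f : ι → n} (hf : Function.Injective f)
    (M : Matrix m n R) (v : n → R) (N : Matrix n l R) :
    M * diagonal ((Set.range f).indicator v) * N =
      M.submatrix id f * diagonal (v ∘ f) * N.submatrix f id := by
  ext i j
  rw [mul_apply, mul_apply]
  simp only [mul_diagonal, submatrix_apply, id_eq, Function.comp_apply]
  refine (Fintype.sum_of_injective f hf _ _ (fun a ha => ?_) (fun b => ?_)).symm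
  · simp [Set.indicator_of_notMem ha]
  · simp

variable {𝕜 : Type*} [RCLike 𝕜] {ι l m n : Type*} [Fintype ι] [Fintype l] [Fintype m]
  [Fintype n] [DecidableEq ι] [DecidableEq l] [DecidableEq n]

lemma l2_opNorm_le_one_of_conjTranspose_mul_self {Q : Matrix m n 𝕜} (hQ : Qᴴ * Q = 1) :
    ‖Q‖ ≤ 1 := by
  have h := l2_opNorm_conjTranspose_mul_self Q
  rw [hQ] at h
  nlinarith [norm_nonneg Q, (IsStarProjection.one (R := Matrix n n 𝕜)).norm_le]

lemma isStarProjection_mul_conjTranspose {Q : Matrix m n 𝕜} (hQ : Qᴴ * Q = 1) :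
    IsStarProjection (Q * Qᴴ) where
  isIdempotentElem := by
    rw [IsIdempotentElem, Matrix.mul_assoc, ← Matrix.mul_assoc Qᴴ, hQ, Matrix.one_mul]
  isSelfAdjoint := by simp [IsSelfAdjoint, star_eq_conjTranspose]

lemma l2_opNorm_diagonal_le {v : n → 𝕜} {c : ℝ} (hc : 0 ≤ c) (hv : ∀ i, ‖v i‖ ≤ c) :
    ‖diagonal v‖ ≤ c := by
  rw [l2_opNorm_diagonal]
  exact (pi_norm_le_iff_of_nonneg hc).mpr hv

theorem l2_opNorm_unitary_conj_diagonal_mul_le {U : Matrix n n 𝕜}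
    (hU : U ∈ unitaryGroup n 𝕜) {f : ι → n} (hf : Function.Injective f) {v : n → 𝕜} {c d : ℝ}
    (hc : 0 ≤ c) (hd : 0 ≤ d)
    (hv_tail : ∀ i ∉ Set.range f, ‖v i‖ ≤ c) (hv_head : ∀ j, ‖v (f j)‖ ≤ d)
    {P : Matrix n l 𝕜} (hP : ‖P‖ ≤ 1) :
    ‖U * diagonal v * Uᴴ * P‖ ≤ c + d * ‖(U.submatrix id f)ᴴ * P‖ := by
  set Uₖ := U.submatrix id f
  have hUₖ : Uₖᴴ * Uₖ = 1 := by
    rw [conjTranspose_submatrix, ← submatrix_mul _ _ _ _ _ Function.bijective_id,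
      ← star_eq_conjTranspose, Unitary.star_mul_self_of_mem hU, submatrix_one _ hf]
  have hsplit : U * diagonal v * Uᴴ =
      U * diagonal ((Set.range f)ᶜ.indicator v) * Uᴴ + Uₖ * diagonal (v ∘ f) * Uₖᴴ := by
    rw [conjTranspose_submatrix, ← mul_diagonal_indicator_range_mul hf, ← add_mul, ← mul_add,
      diagonal_add]
    simp only [Set.indicator_compl_add_self_apply]
  have htail : ‖U * diagonal ((Set.range f)ᶜ.indicator v) * Uᴴ * P‖ ≤ c := by
    have hdiag : ‖diagonal ((Set.range f)ᶜ.indicator v)‖ ≤ c := by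
      refine l2_opNorm_diagonal_le hc fun i => ?_
      by_cases hi : i ∈ Set.range f
      · rw [Set.indicator_of_notMem (Set.notMem_compl_iff.mpr hi), norm_zero]
        exact hc
      · rw [Set.indicator_of_mem hi]
        exact hv_tail i hi
    calc _ ≤ ‖U * diagonal ((Set.range f)ᶜ.indicator v) * Uᴴ‖ * ‖P‖ := l2_opNorm_mul _ _
      _ ≤ ‖diagonal ((Set.range f)ᶜ.indicator v)‖ := by
        rw [← star_eq_conjTranspose, CStarRing.norm_mul_mem_unitary _ (Unitary.star_mem hU),
          CStarRing.norm_mem_unitary_mul _ hU]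
        exact mul_le_of_le_one_right (norm_nonneg _) hP
      _ ≤ c := hdiag
  have hhead : ‖Uₖ * diagonal (v ∘ f) * Uₖᴴ * P‖ ≤ d * ‖Uₖᴴ * P‖ :=
    calc _ = ‖Uₖ * diagonal (v ∘ f) * (Uₖᴴ * P)‖ := by rw [Matrix.mul_assoc]
      _ ≤ ‖Uₖ‖ * ‖diagonal (v ∘ f)‖ * ‖Uₖᴴ * P‖ :=
        (l2_opNorm_mul _ _).trans (by gcongr; exact l2_opNorm_mul _ _)
      _ ≤ 1 * d * ‖Uₖᴴ * P‖ := by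
        gcongr
        · exact l2_opNorm_le_one_of_conjTranspose_mul_self hUₖ
        · exact l2_opNorm_diagonal_le hd hv_head
      _ = d * ‖Uₖᴴ * P‖ := by rw [one_mul]
  rw [hsplit, Matrix.add_mul]
  exact (norm_add_le _ _).trans (add_le_add htail hhead)

end Matrix

lemma specNorm_eq_l2_opNorm {m n : Type*} [Fintype m] [Fintype n] [DecidableEq n]
    (M : Matrix m n ℝ) : specNorm M = ‖M‖ := rfl

/-- For symmetric `A = V Λ Vᵀ` with `|λ₁| ≥ ... ≥ |λₙ|` and any orthogonal projection
`P = Q Qᵀ` of rank `k`: `‖A(I − P)‖ ≤ |λ_{k+1}| + |λ₁| ‖V_kᵀ(I − P)‖`. -/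
theorem minres_stmt14 (n k : ℕ) (hkn : k < n)
    (A V : Matrix (Fin n) (Fin n) ℝ) (lam : Fin n → ℝ)
    (hV : V ∈ Matrix.orthogonalGroup (Fin n) ℝ)
    (hA : A = V * Matrix.diagonal lam * Vᵀ)
    (hord : ∀ i j : Fin n, i ≤ j → |lam j| ≤ |lam i|)
    (Q : Matrix (Fin n) (Fin k) ℝ) (hQ : Qᵀ * Q = 1) :
    specNorm (A * (1 - Q * Qᵀ)) ≤
      |lam ⟨k, hkn⟩| + |lam ⟨0, Nat.lt_of_le_of_lt (Nat.zero_le k) hkn⟩| *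
        specNorm ((V.submatrix id fun j : Fin k => (⟨j, j.2.trans hkn⟩ : Fin n))ᵀ *
          (1 - Q * Qᵀ)) := by
  have hP : ‖1 - Q * Qᵀ‖ ≤ 1 := by
    rw [← conjTranspose_eq_transpose_of_trivial] at hQ ⊢
    exact (isStarProjection_mul_conjTranspose hQ).one_sub.norm_le
  have hv_tail : ∀ i ∉ Set.range (Fin.castLE hkn.le), |lam i| ≤ |lam ⟨k, hkn⟩| :=
    fun i hi => hord _ _ (not_lt.mp fun h => hi ⟨⟨i, h⟩, rfl⟩)
  have hv_head : ∀ j : Fin k, |lam (Fin.castLE hkn.le j)| ≤ |lam ⟨0, by omega⟩| :=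
    fun j => hord _ _ (Nat.zero_le _)
  rw [specNorm_eq_l2_opNorm, specNorm_eq_l2_opNorm, hA]
  have h := l2_opNorm_unitary_conj_diagonal_mul_le hV (Fin.castLE_injective hkn.le)
    (abs_nonneg _) (abs_nonneg _) hv_tail hv_head hP
  rwa [conjTranspose_eq_transpose_of_trivial, conjTranspose_eq_transpose_of_trivial] at h
end

section
/- With notation as above (T̂ₙ symmetric tridiagonal from an orthogonal similarity of A, with off-diagonals β_i > 0), for k = 1,...,n−2 the entries satisfy β_{k+1} ≤ γ_k and |α_{k+2}| ≤ γ_k, where γ_k = ‖A − Q_{k+1} T_k Q_kᵀ‖. -/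
open Matrix BigOperators

open scoped Matrix.Norms.L2Operator

namespace Matrix

lemma norm_apply_le_l2_opNorm {𝕜 m n : Type*} [RCLike 𝕜] [Fintype m] [Fintype n]
    [DecidableEq n] (M : Matrix m n 𝕜) (i : m) (j : n) : ‖M i j‖ ≤ ‖M‖ := by
  have hcol := M.l2_opNorm_mulVec (EuclideanSpace.single j 1)
  rw [PiLp.norm_single, norm_one, mul_one] at hcol
  refine le_trans (le_of_eq ?_) ((PiLp.norm_apply_le _ i).trans hcol)
  simp

lemma l2_opNorm_transpose_mul_mul_of_mem_orthogonalGroup {n : Type*} [Fintype n]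
    [DecidableEq n] {Q : Matrix n n ℝ} (hQ : Q ∈ orthogonalGroup n ℝ) (M : Matrix n n ℝ) :
    ‖Qᵀ * M * Q‖ = ‖M‖ := by
  have hQt : Qᵀ = star Q := (conjTranspose_eq_transpose_of_trivial Q).symm
  rw [CStarRing.norm_mul_mem_unitary _ hQ, hQt,
    CStarRing.norm_mem_unitary_mul _ (Unitary.star_mem hQ)]

lemma transpose_mul_submatrix_mul_mul_apply_eq_zero {R n κ : Type*} [Ring R]
    [Fintype n] [Fintype κ] [DecidableEq n] {Q : Matrix n n R} (hQ : Qᵀ * Q = 1) (e : κ → n)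
    (B : Matrix κ n R) {i : n} (hi : i ∉ Set.range e) (j : n) :
    (Qᵀ * (Q.submatrix id e * B) * Q) i j = 0 := by
  have hcols : Qᵀ * Q.submatrix id e = (1 : Matrix n n R).submatrix id e := by
    rw [← hQ]; ext; simp [mul_apply]
  rw [← Matrix.mul_assoc, hcols]
  simp only [mul_apply, submatrix_apply, id, one_apply]
  simp [fun a => (ne_of_mem_of_not_mem (Set.mem_range_self a) hi).symm]

lemma transpose_mul_sub_submatrix_mul_mul_apply {R n κ : Type*} [Ring R]
    [Fintype n] [Fintype κ] [DecidableEq n] {Q : Matrix n n R} (hQ : Qᵀ * Q = 1) (A : Matrix n n R)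
    (e : κ → n) (B : Matrix κ n R) {i : n} (hi : i ∉ Set.range e) (j : n) :
    (Qᵀ * (A - Q.submatrix id e * B) * Q) i j = (Qᵀ * A * Q) i j := by
  rw [Matrix.mul_sub, Matrix.sub_mul, sub_apply,
    transpose_mul_submatrix_mul_mul_apply_eq_zero hQ e B hi, sub_zero]

end Matrix

theorem minres_stmt17_general (n k : ℕ) (hk : k + 1 < n)
    (A Qn That : Matrix (Fin n) (Fin n) ℝ)
    (hQn : Qn ∈ Matrix.orthogonalGroup (Fin n) ℝ)
    (hT : That = Qnᵀ * A * Qn)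
    (Tk : Matrix (Fin (k + 1)) (Fin k) ℝ)
    (Qk : Matrix (Fin n) (Fin k) ℝ)
    (Qk1 : Matrix (Fin n) (Fin (k + 1)) ℝ)
    (hQk1 : Qk1 = Qn.submatrix id fun j : Fin (k + 1) => (⟨j, lt_trans j.2 hk⟩ : Fin n)) :
    That ⟨k + 1, hk⟩ ⟨k, Nat.lt_of_succ_lt hk⟩ ≤ specNorm (A - Qk1 * Tk * Qkᵀ) ∧
    |That ⟨k + 1, hk⟩ ⟨k + 1, hk⟩| ≤ specNorm (A - Qk1 * Tk * Qkᵀ) := by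
  have hQQ : Qnᵀ * Qn = 1 := by
    simpa [star_eq_conjTranspose] using hQn.1
  have hnotCol : (⟨k + 1, hk⟩ : Fin n) ∉
      Set.range fun j : Fin (k + 1) => (⟨j, lt_trans j.2 hk⟩ : Fin n) := by
    rintro ⟨j, hj⟩
    have := congrArg Fin.val hj
    simp only at this
    omega
  have hbound : ∀ j, |That ⟨k + 1, hk⟩ j| ≤ specNorm (A - Qk1 * Tk * Qkᵀ) := fun j =>
    calc |That ⟨k + 1, hk⟩ j| = |(Qnᵀ * (A - Qk1 * Tk * Qkᵀ) * Qn) ⟨k + 1, hk⟩ j| := by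
          rw [hT, Matrix.mul_assoc Qk1, hQk1,
            transpose_mul_sub_submatrix_mul_mul_apply hQQ A _ (Tk * Qkᵀ) hnotCol]
      _ ≤ ‖Qnᵀ * (A - Qk1 * Tk * Qkᵀ) * Qn‖ := norm_apply_le_l2_opNorm (Qnᵀ * _ * Qn) _ _
      _ = specNorm (A - Qk1 * Tk * Qkᵀ) :=
          (l2_opNorm_transpose_mul_mul_of_mem_orthogonalGroup hQn _).trans
            (specNorm_eq_l2_opNorm _).symm
  exact ⟨(le_abs_self _).trans (hbound _), hbound _⟩

/-- For `T̂ₙ = Qₙᵀ A Qₙ` symmetric tridiagonal with positive off-diagonals, for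
`k = 1, ..., n−2` the entries satisfy `β_{k+1} ≤ γ_k` and `|α_{k+2}| ≤ γ_k`, where
`γ_k = ‖A − Q_{k+1} T_k Q_kᵀ‖`. -/
theorem minres_stmt17 (n k : ℕ) (hk1 : 1 ≤ k) (hk : k + 1 < n)
    (A Qn That : Matrix (Fin n) (Fin n) ℝ)
    (hAsymm : A.IsSymm)
    (hQn : Qn ∈ Matrix.orthogonalGroup (Fin n) ℝ)
    (hT : That = Qnᵀ * A * Qn)
    (htri : ∀ i j : Fin n, (j : ℕ) + 1 < (i : ℕ) → That i j = 0)
    (hβ : ∀ i j : Fin n, (i : ℕ) + 1 = (j : ℕ) → 0 < That i j)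
    (Tk : Matrix (Fin (k + 1)) (Fin k) ℝ)
    (hTk : Tk = Matrix.of fun (i : Fin (k + 1)) (j : Fin k) =>
      That ⟨i, lt_trans i.2 hk⟩ ⟨j, lt_trans j.2 (Nat.lt_of_succ_lt hk)⟩)
    (Qk : Matrix (Fin n) (Fin k) ℝ)
    (hQk : Qk = Qn.submatrix id fun j : Fin k =>
      (⟨j, lt_trans j.2 (Nat.lt_of_succ_lt hk)⟩ : Fin n))
    (Qk1 : Matrix (Fin n) (Fin (k + 1)) ℝ)
    (hQk1 : Qk1 = Qn.submatrix id fun j : Fin (k + 1) => (⟨j, lt_trans j.2 hk⟩ : Fin n)) :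
    That ⟨k + 1, hk⟩ ⟨k, Nat.lt_of_succ_lt hk⟩ ≤ specNorm (A - Qk1 * Tk * Qkᵀ) ∧
    |That ⟨k + 1, hk⟩ ⟨k + 1, hk⟩| ≤ specNorm (A - Qk1 * Tk * Qkᵀ) :=
  minres_stmt17_general n k hk A Qn That hQn hT Tk Qk Qk1 hQk1
end
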